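/- Let p be a prime with p > g-1. If the multiplicative order of g modulo p^n is even, then p^n is complete. If g is a perfect square, then p^n is complete regardless of the parity of the order. -/

import Mathlib

/-- A cycle for the digit set `{0, m}` with scale `g`: integers `x i`, digits `l i ∈ {0, m}`,
satisfying `x (i+1) = (x i + l i) / g` cyclically. -/
def IsCycle (g m : ℕ) (r : ℕ) (x l : ZMod r → ℤ) : Prop :=
  0 < r ∧ (∀ i, l i = 0 ∨ l i = (m : ℤ)) ∧ (∀ i, (g : ℤ) * x (i + 1) = x i + l i)

/-- A non-trivial extreme cycle: a cycle whose digits are not all zero. -/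
def IsNontrivialCycle (g m : ℕ) (r : ℕ) (x l : ZMod r → ℤ) : Prop :=
  IsCycle g m r x l ∧ ∃ i, l i ≠ 0

/-- `m` is incomplete if there exists a non-trivial extreme cycle for `{0, m}`. -/
def Incomplete (g m : ℕ) : Prop :=
  ∃ (r : ℕ) (x l : ZMod r → ℤ), IsNontrivialCycle g m r x l

/-- `m` is complete if the only extreme cycle for `{0, m}` is the trivial one. -/
def Complete (g m : ℕ) : Prop := ¬ Incomplete g m

/-- `m` is primitive if it is incomplete and all proper divisors of `m` are complete. -/
def Primitive (g m : ℕ) : Prop :=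
  Incomplete g m ∧ ∀ d : ℕ, d ∣ m → d ≠ m → Complete g d

/-! Reducing a cycle modulo `m = p ^ n` turns `g x (i + 1) = x i + l i` into
`g x (i + 1) ≡ x i`, hence `g ^ s x j ≡ x (j - s)`. All `x i` satisfy `0 ≤ x i` and
`(g - 1) x i < m` (strict since `g - 1 ∤ p ^ n`), so a congruence `g ^ s ≡ a` with
`|a| ≤ g - 2` forces the integer identity `a x j = x (j - s)`. Summing over the cycle gives
`(a - 1) ∑ x = 0`, so for `a ≠ 1` the cycle is trivial.

Such an `a` exists: if the order `d` of `g` is even, `g ^ (d / 2) = -1` because `±1` are the only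
square roots of `1` modulo an odd prime power; if `g = k ^ 2` and `d = 2c + 1` is odd, then
`(k ^ d) ^ 2 = 1` and `g ^ (c + 1) = k ^ d * k = ±k`. -/

namespace IsCycle

variable {g m r : ℕ} {x l : ZMod r → ℤ}

lemma digit_nonneg (hc : IsCycle g m r x l) (i : ZMod r) : 0 ≤ l i := by
  rcases hc.2.1 i with h | h <;> simp [h]

lemma digit_le (hc : IsCycle g m r x l) (i : ZMod r) : l i ≤ m := by
  rcases hc.2.1 i with h | h <;> simp [h]

lemma mul_eq_pred (hc : IsCycle g m r x l) (i : ZMod r) :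
    (g : ℤ) * x i = x (i - 1) + l (i - 1) := by
  simpa using hc.2.2 (i - 1)

lemma nonneg (hc : IsCycle g m r x l) (hg : 2 ≤ g) (i : ZMod r) : 0 ≤ x i := by
  have : NeZero r := ⟨hc.1.ne'⟩
  obtain ⟨j, -, hj⟩ := Finset.univ.exists_min_image x Finset.univ_nonempty
  have hrec := hc.mul_eq_pred j
  have hpred := hj (j - 1) (Finset.mem_univ _)
  have hl := hc.digit_nonneg (j - 1)
  have hg' : (2 : ℤ) ≤ g := by exact_mod_cast hg
  have hxj : 0 ≤ x j := by nlinarith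
  exact hxj.trans (hj i (Finset.mem_univ _))

lemma sub_one_mul_le (hc : IsCycle g m r x l) (hg : 1 ≤ g) (i : ZMod r) :
    ((g : ℤ) - 1) * x i ≤ m := by
  have : NeZero r := ⟨hc.1.ne'⟩
  obtain ⟨j, -, hj⟩ := Finset.univ.exists_max_image x Finset.univ_nonempty
  have hrec := hc.mul_eq_pred j
  have hpred := hj (j - 1) (Finset.mem_univ _)
  have hl := hc.digit_le (j - 1)
  have hg' : (1 : ℤ) ≤ g := by exact_mod_cast hg
  nlinarith [mul_le_mul_of_nonneg_left (hj i (Finset.mem_univ _))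
    (by linarith : (0 : ℤ) ≤ g - 1)]

lemma sub_one_mul_lt (hc : IsCycle g m r x l) (hg : 1 ≤ g) (hm : ¬ ((g : ℤ) - 1) ∣ m)
    (i : ZMod r) : ((g : ℤ) - 1) * x i < m :=
  (hc.sub_one_mul_le hg i).lt_of_ne fun h ↦ hm ⟨x i, h.symm⟩

lemma natCast_mul_succ (hc : IsCycle g m r x l) (i : ZMod r) :
    (g : ZMod m) * (x (i + 1) : ZMod m) = x i := by
  have h := congrArg (Int.cast : ℤ → ZMod m) (hc.2.2 i)
  have hl : (l i : ZMod m) = 0 := by rcases hc.2.1 i with h | h <;> simp [h]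
  push_cast at h
  rw [h, hl, add_zero]

lemma natCast_pow_mul (hc : IsCycle g m r x l) (s : ℕ) (j : ZMod r) :
    (g : ZMod m) ^ s * (x j : ZMod m) = x (j - s) := by
  induction s with
  | zero => simp
  | succ s ih =>
    have hj : j - ((s + 1 : ℕ) : ZMod r) + 1 = j - s := by push_cast; ring
    rw [pow_succ', mul_assoc, ih, ← hj, hc.natCast_mul_succ]

lemma mul_eq_of_pow_eq (hc : IsCycle g m r x l) (hg : 2 ≤ g) (hm : ¬ ((g : ℤ) - 1) ∣ m)
    {a : ℤ} (ha : |a| ≤ g - 2) {s : ℕ} (hs : (g : ZMod m) ^ s = a) (j : ZMod r) :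
    a * x j = x (j - s) := by
  have hdvd : (m : ℤ) ∣ a * x j - x (j - s) := by
    rw [← ZMod.intCast_zmod_eq_zero_iff_dvd]
    push_cast
    rw [← hs, hc.natCast_pow_mul, sub_self]
  rw [← sub_eq_zero]
  refine Int.eq_zero_of_abs_lt_dvd hdvd ?_
  have hA := hc.sub_one_mul_lt (by omega) hm j
  have hB := hc.sub_one_mul_lt (by omega) hm (j - s)
  have hA0 := hc.nonneg hg j
  have hB0 := hc.nonneg hg (j - s)
  have hg' : (2 : ℤ) ≤ g := by exact_mod_cast hg
  have habs : |a * x j - x (j - s)| ≤ |a| * x j + x (j - s) := by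
    calc |a * x j - x (j - s)| ≤ |a * x j| + |x (j - s)| := abs_sub _ _
      _ = |a| * x j + x (j - s) := by rw [abs_mul, abs_of_nonneg hA0, abs_of_nonneg hB0]
  have : ((g : ℤ) - 1) * (|a| * x j + x (j - s)) < ((g : ℤ) - 1) * m := by
    nlinarith [mul_le_mul_of_nonneg_left hA.le (abs_nonneg a)]
  have := lt_of_mul_lt_mul_left this (by linarith)
  linarith

end IsCycle

lemma IsNontrivialCycle.exists_ne_zero {g m r : ℕ} {x l : ZMod r → ℤ}
    (hc : IsNontrivialCycle g m r x l) : ∃ i, x i ≠ 0 := by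
  by_contra! h
  obtain ⟨i, hi⟩ := hc.2
  have := hc.1.2.2 i
  simp only [h, mul_zero, zero_add] at this
  exact hi this.symm

lemma complete_of_pow_eq {g m : ℕ} (hg : 2 ≤ g) (hm : ¬ ((g : ℤ) - 1) ∣ m) {a : ℤ}
    (ha1 : a ≠ 1) (ha : |a| ≤ g - 2) {s : ℕ} (hs : (g : ZMod m) ^ s = a) : Complete g m := by
  rintro ⟨r, x, l, hc⟩
  have : NeZero r := ⟨hc.1.1.ne'⟩
  have hsum : a * ∑ j, x j = ∑ j, x j := by
    rw [Finset.mul_sum]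
    simp_rw [hc.1.mul_eq_of_pow_eq hg hm ha hs]
    exact (Equiv.subRight (s : ZMod r)).sum_comp x
  have hsum0 : ∑ j, x j = 0 := by
    have : (a - 1) * ∑ j, x j = 0 := by linear_combination hsum
    exact (mul_eq_zero.mp this).resolve_left (sub_ne_zero.mpr ha1)
  obtain ⟨i, hi⟩ := hc.exists_ne_zero
  exact hi ((Finset.sum_eq_zero_iff_of_nonneg fun j _ ↦ hc.1.nonneg hg j).mp hsum0 i
    (Finset.mem_univ i))

lemma Nat.not_dvd_prime_pow_of_lt {p d : ℕ} (hp : p.Prime) (hd : 1 < d) (hdp : d < p)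
    (n : ℕ) : ¬ d ∣ p ^ n := by
  intro hdvd
  obtain ⟨k, -, rfl⟩ := (Nat.dvd_prime_pow hp).mp hdvd
  rcases k with _ | k
  · simp at hd
  · exact (Nat.le_self_pow k.succ_ne_zero p).not_gt hdp

lemma complete_prime_pow_of_pow_eq {g p : ℕ} (hg : 3 ≤ g) (hp : p.Prime) (hpg : g - 1 < p)
    (n : ℕ) {a : ℤ} (ha1 : a ≠ 1) (ha : |a| ≤ g - 2) {s : ℕ}
    (hs : (g : ZMod (p ^ n)) ^ s = a) : Complete g (p ^ n) := by
  refine complete_of_pow_eq (by omega) ?_ ha1 ha hs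
  have := Nat.not_dvd_prime_pow_of_lt hp (d := g - 1) (by omega) hpg n
  rwa [← Int.natCast_dvd_natCast, Nat.cast_sub (by omega), Nat.cast_one] at this

lemma ZMod.isLocalRing_prime_pow {p n : ℕ} [Fact p.Prime] (hn : n ≠ 0) :
    IsLocalRing (ZMod (p ^ n)) :=
  have : Nontrivial (ZMod (p ^ n)) :=
    ZMod.nontrivial_iff.mpr (Nat.one_lt_pow hn (Fact.out : p.Prime).one_lt).ne'
  IsLocalRing.of_surjective (PadicInt.toZModPow n) (ZMod.ringHom_surjective _)

section LocalRing

variable {R : Type*} [CommRing R] [IsLocalRing R]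

/-- `(y + 1) - (y - 1) = 2` is a unit, so one of the factors of `(y - 1) * (y + 1) = 0` is. -/
lemma IsLocalRing.eq_one_or_eq_neg_one_of_sq_eq_one (h2 : IsUnit (2 : R)) {y : R}
    (hy : y ^ 2 = 1) : y = 1 ∨ y = -1 := by
  have hprod : (y - 1) * (y + 1) = 0 := by linear_combination hy
  have hunit : IsUnit ((y - 1) + -(y + 1)) := by
    have : (y - 1) + -(y + 1) = -2 := by ring
    rw [this]
    exact h2.neg
  rcases IsLocalRing.isUnit_or_isUnit_of_isUnit_add hunit with h | h
  · exact .inr (eq_neg_of_add_eq_zero_left (h.mul_right_eq_zero.mp hprod))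
  · exact .inl (sub_eq_zero.mp (((IsUnit.neg_iff _).mp h).mul_left_eq_zero.mp hprod))

lemma IsLocalRing.pow_orderOf_div_two_eq_neg_one (h2 : IsUnit (2 : R)) {u : R}
    (h0 : 0 < orderOf u) (heven : Even (orderOf u)) : u ^ (orderOf u / 2) = -1 := by
  obtain ⟨t, ht⟩ := heven
  have hsq : (u ^ (orderOf u / 2)) ^ 2 = 1 := by
    rw [← pow_mul, show orderOf u / 2 * 2 = orderOf u by omega, pow_orderOf_eq_one]
  refine (eq_one_or_eq_neg_one_of_sq_eq_one h2 hsq).resolve_left fun h ↦ ?_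
  have := Nat.le_of_dvd (by omega) (orderOf_dvd_of_pow_eq_one h)
  omega

lemma IsLocalRing.pow_eq_or_pow_eq_neg_of_orderOf_mul_self (h2 : IsUnit (2 : R)) {k : R} {c : ℕ}
    (hc : orderOf (k * k) = 2 * c + 1) : (k * k) ^ (c + 1) = k ∨ (k * k) ^ (c + 1) = -k := by
  have hpow : (k * k) ^ (c + 1) = k ^ orderOf (k * k) * k := by rw [hc]; ring
  have hsq : (k ^ orderOf (k * k)) ^ 2 = 1 := by
    rw [← pow_mul, mul_comm, pow_mul, sq, pow_orderOf_eq_one]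
  rw [hpow]
  rcases eq_one_or_eq_neg_one_of_sq_eq_one h2 hsq with h | h
  · exact .inl (by rw [h, one_mul])
  · exact .inr (by rw [h, neg_one_mul])

end LocalRing

lemma Nat.Prime.not_dvd_of_even {p g : ℕ} (hp : p.Prime) (hg : Even g) (hg2 : 2 < g)
    (hgp : g ≤ p) : ¬ p ∣ g := fun h ↦ by
  have hpg : g = p := le_antisymm hgp (Nat.le_of_dvd (by omega) h)
  have := hp.even_iff.mp (hpg ▸ hg)
  omega

theorem stmt11 (g p n : ℕ) (hg4 : 4 ≤ g) (hge : Even g)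
    (hp : p.Prime) (hpg : g - 1 < p) (hn : 1 ≤ n) :
    (Even (orderOf ((g : ZMod (p ^ n)))) → Complete g (p ^ n)) ∧
      (IsSquare g → Complete g (p ^ n)) := by
  have : Fact p.Prime := ⟨hp⟩
  have : IsLocalRing (ZMod (p ^ n)) := ZMod.isLocalRing_prime_pow (by omega)
  have h2 : IsUnit (2 : ZMod (p ^ n)) := by
    exact_mod_cast (ZMod.isUnit_natCast_iff_not_dvd_pow hp hn).mpr fun h ↦ by
      have := Nat.le_of_dvd two_pos h; omega
  have hord : 0 < orderOf (g : ZMod (p ^ n)) := orderOf_pos_iff.mpr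
    ((ZMod.isUnit_natCast_iff_not_dvd_pow hp hn).mpr
      (hp.not_dvd_of_even hge (by omega) (by omega))).isOfFinOrder
  have even_case (heven : Even (orderOf (g : ZMod (p ^ n)))) : Complete g (p ^ n) :=
    complete_prime_pow_of_pow_eq (by omega) hp hpg n (a := -1) (by norm_num)
      (by rw [abs_neg, abs_one]; omega)
      (by push_cast; exact IsLocalRing.pow_orderOf_div_two_eq_neg_one h2 hord heven)
  refine ⟨even_case, ?_⟩
  rintro ⟨k, rfl⟩
  rcases Nat.even_or_odd (orderOf ((k * k : ℕ) : ZMod (p ^ n))) with heven | ⟨c, hc⟩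
  · exact even_case heven
  have hk : 2 ≤ k := by nlinarith
  have hka : |(k : ℤ)| ≤ (k * k : ℕ) - 2 := by
    push_cast; rw [abs_of_nonneg (by positivity)]; nlinarith
  push_cast at hc
  rcases IsLocalRing.pow_eq_or_pow_eq_neg_of_orderOf_mul_self h2 hc with h | h
  · exact complete_prime_pow_of_pow_eq (by omega) hp hpg n (a := k) (by omega) hka
      (by push_cast; exact h)
  · exact complete_prime_pow_of_pow_eq (by omega) hp hpg n (a := -k) (by omega)
      (by rwa [abs_neg]) (by push_cast; exact h)
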